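/- arXiv:2309.09129 — 6 statements merged into one kernel-verified Lean document; each statement's English description precedes it below -/
import Mathlib

section
/- Let X be a real random variable with E[X]=0 and Z a standard normal random variable independent of X. For p ≥ 1, define f(a) = E[|X - a(X+Z)|^p]. Then f is non-decreasing on [1,∞): for all a ≥ 1, f'(a) = E[g((a-1)X + aZ)(X+Z)] ≥ 0, where g(t) = p·sign(t)·|t|^{p-1}. -/
/-!
Write `W a = (a - 1) X + a Z`, so that `|X - a (X + Z)| = |W a|` and `W b - W a = (b - a) (X + Z)`.
The tangent-line inequality `|u| ^ p + g u (v - u) ≤ |v| ^ p` for the convex function `|t| ^ p`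
gives `f b ≥ f a + (b - a) E[g (W a) (X + Z)]`, so it suffices that this derivative is
nonnegative. Split it as `E[g (a Z + (a - 1) X) X] + E[g ((a - 1) X + a Z) Z]`. Since `g` is
non-decreasing and `a - 1, a ≥ 0`, the integrands dominate `g (a Z) X` and `g ((a - 1) X) Z`
pointwise, and these have mean zero by independence, as `E X = E Z = 0`.
-/

open MeasureTheory ProbabilityTheory Real

lemma ConvexOn.add_mul_sub_le_of_hasDerivAt {S : Set ℝ} {f : ℝ → ℝ} {x y f' : ℝ}
    (hf : ConvexOn ℝ S f) (hx : x ∈ S) (hy : y ∈ S) (hf' : HasDerivAt f f' x) :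
    f x + f' * (y - x) ≤ f y := by
  rcases lt_trichotomy x y with hxy | rfl | hxy
  · have h := hf.le_slope_of_hasDerivAt hx hy hxy hf'
    rw [slope_def_field, le_div_iff₀ (sub_pos.2 hxy)] at h
    linarith
  · simp
  · have h := hf.slope_le_of_hasDerivAt hy hx hxy hf'
    rw [slope_def_field, div_le_iff₀ (sub_pos.2 hxy)] at h
    linarith

lemma Real.rpow_add_mul_rpow_sub_one_mul_sub_le {p s t : ℝ} (hp : 1 ≤ p) (hs : 0 ≤ s)
    (ht : 0 ≤ t) : s ^ p + p * s ^ (p - 1) * (t - s) ≤ t ^ p :=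
  (convexOn_rpow hp).add_mul_sub_le_of_hasDerivAt hs ht (hasDerivAt_rpow_const (.inr hp))

lemma Real.sign_mul_self_eq_abs (u : ℝ) : sign u * u = |u| := by
  rcases lt_trichotomy u 0 with hu | rfl | hu
  · rw [sign_of_neg hu, abs_of_neg hu, neg_one_mul]
  · simp
  · rw [sign_of_pos hu, abs_of_pos hu, one_mul]

lemma Real.sign_mul_le_abs (u v : ℝ) : sign u * v ≤ |v| := by
  rcases sign_apply_eq u with h | h | h <;> rw [h]
  · simpa using neg_le_abs v
  · simp
  · simpa using le_abs_self v

/-- For `1 < p` this is the derivative of `t ↦ |t| ^ p`; for `p = 1` it is the subgradient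
`sign`. -/
noncomputable def absRpowDeriv (p t : ℝ) : ℝ := p * sign t * |t| ^ (p - 1)

lemma abs_rpow_add_absRpowDeriv_mul_sub_le {p : ℝ} (hp : 1 ≤ p) (u v : ℝ) :
    |u| ^ p + absRpowDeriv p u * (v - u) ≤ |v| ^ p := by
  calc |u| ^ p + absRpowDeriv p u * (v - u)
      = |u| ^ p + p * |u| ^ (p - 1) * (sign u * v - |u|) := by
        rw [absRpowDeriv, ← sign_mul_self_eq_abs]; ring
    _ ≤ |u| ^ p + p * |u| ^ (p - 1) * (|v| - |u|) := by
        gcongr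
        exact sign_mul_le_abs u v
    _ ≤ |v| ^ p := rpow_add_mul_rpow_sub_one_mul_sub_le hp (abs_nonneg u) (abs_nonneg v)

lemma monotone_absRpowDeriv {p : ℝ} (hp : 1 ≤ p) : Monotone (absRpowDeriv p) := by
  intro s t hst
  rcases hst.eq_or_lt with rfl | hst
  · rfl
  have h₁ := abs_rpow_add_absRpowDeriv_mul_sub_le hp s t
  have h₂ := abs_rpow_add_absRpowDeriv_mul_sub_le hp t s
  nlinarith

lemma Real.rpow_sub_one_mul_le_rpow_add_rpow {p a b : ℝ} (hp : 1 ≤ p) (ha : 0 ≤ a) (hb : 0 ≤ b) :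
    a ^ (p - 1) * b ≤ a ^ p + b ^ p := by
  have hm : a ^ (p - 1) * b ≤ max a b ^ (p - 1) * max a b := by
    gcongr
    exacts [le_max_left a b, le_max_right a b]
  rw [← rpow_add_one' (le_max_of_le_left ha) (by linarith), sub_add_cancel] at hm
  rcases max_choice a b with h | h <;> rw [h] at hm
  · linarith [rpow_nonneg hb p]
  · linarith [rpow_nonneg ha p]

lemma abs_absRpowDeriv_mul_le {p : ℝ} (hp : 1 ≤ p) (u v : ℝ) :
    |absRpowDeriv p u * v| ≤ p * (|u| ^ p + |v| ^ p) := by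
  have hsign : |sign u| ≤ 1 := by
    rcases sign_apply_eq u with h | h | h <;> simp [h]
  calc |absRpowDeriv p u * v| = p * |sign u| * (|u| ^ (p - 1) * |v|) := by
        rw [absRpowDeriv, abs_mul, abs_mul, abs_mul, abs_of_nonneg (by linarith : 0 ≤ p),
          abs_of_nonneg (rpow_nonneg (abs_nonneg u) _)]
        ring
    _ ≤ p * 1 * (|u| ^ p + |v| ^ p) := by
        gcongr
        exact rpow_sub_one_mul_le_rpow_add_rpow hp (abs_nonneg u) (abs_nonneg v)
    _ = p * (|u| ^ p + |v| ^ p) := by ring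

lemma Monotone.mul_le_comp_add_mul_mul {f : ℝ → ℝ} (hf : Monotone f) {b : ℝ} (hb : 0 ≤ b)
    (c y : ℝ) : f c * y ≤ f (c + b * y) * y := by
  rcases le_total 0 y with hy | hy
  · exact mul_le_mul_of_nonneg_right (hf (by nlinarith)) hy
  · exact mul_le_mul_of_nonpos_right (hf (by nlinarith)) hy

section Integration

variable {Ω : Type*} [MeasurableSpace Ω] {μ : Measure Ω}

lemma integrable_abs_rpow_iff_memLp {f : Ω → ℝ} {p : ℝ} (hp : 0 < p)
    (hf : AEStronglyMeasurable f μ) :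
    Integrable (fun ω => |f ω| ^ p) μ ↔ MemLp f (.ofReal p) μ := by
  have h := integrable_norm_rpow_iff hf (ENNReal.ofReal_ne_zero_iff.2 hp) ENNReal.ofReal_ne_top
  rwa [ENNReal.toReal_ofReal hp.le] at h

lemma ProbabilityTheory.HasLaw.memLp {Z : Ω → ℝ} {ν : Measure ℝ} (hZ : HasLaw Z ν μ)
    {q : ENNReal} (h : MemLp id q ν) : MemLp Z q μ := by
  rw [← hZ.map_eq] at h
  exact (memLp_map_measure_iff aestronglyMeasurable_id hZ.aemeasurable).1 h

lemma ProbabilityTheory.IndepFun.integral_comp_add_mul_mul_nonneg {f : ℝ → ℝ} (hf : Monotone f)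
    {U V : Ω → ℝ} (hUV : IndepFun U V μ) (hV : Integrable V μ) (hV0 : ∫ ω, V ω ∂μ = 0)
    {b : ℝ} (hb : 0 ≤ b) (hfU : Integrable (fun ω => f (U ω)) μ)
    (hint : Integrable (fun ω => f (U ω + b * V ω) * V ω) μ) :
    0 ≤ ∫ ω, f (U ω + b * V ω) * V ω ∂μ := by
  have hind : IndepFun (fun ω => f (U ω)) V μ := hUV.comp hf.measurable measurable_id
  calc 0 = ∫ ω, f (U ω) * V ω ∂μ := by
        rw [hind.integral_fun_mul_eq_mul_integral hfU.1 hV.1, hV0, mul_zero]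
    _ ≤ _ := integral_mono (hind.integrable_mul hfU hV) hint
        fun ω => hf.mul_le_comp_add_mul_mul hb _ _

lemma integrable_absRpowDeriv_comp_mul {p : ℝ} (hp : 1 ≤ p) {U V : Ω → ℝ}
    (hU : MemLp U (.ofReal p) μ) (hV : MemLp V (.ofReal p) μ) :
    Integrable (fun ω => absRpowDeriv p (U ω) * V ω) μ := by
  have hp0 : 0 < p := by linarith
  refine ((((integrable_abs_rpow_iff_memLp hp0 hU.1).2 hU).add
    ((integrable_abs_rpow_iff_memLp hp0 hV.1).2 hV)).const_mul p).mono' ?_ ?_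
  · exact ((monotone_absRpowDeriv hp).measurable.comp_aemeasurable
      hU.1.aemeasurable).aestronglyMeasurable.mul hV.1
  · exact ae_of_all _ fun ω => abs_absRpowDeriv_mul_le hp _ _

lemma integrable_absRpowDeriv_comp [IsFiniteMeasure μ] {p : ℝ} (hp : 1 ≤ p) {U : Ω → ℝ}
    (hU : MemLp U (.ofReal p) μ) : Integrable (fun ω => absRpowDeriv p (U ω)) μ := by
  simpa using integrable_absRpowDeriv_comp_mul hp hU (memLp_const 1)

lemma integral_abs_rpow_add_integral_absRpowDeriv_mul_sub_le {p : ℝ} (hp : 1 ≤ p) {U V : Ω → ℝ}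
    (hU : MemLp U (.ofReal p) μ) (hV : MemLp V (.ofReal p) μ) :
    ∫ ω, |U ω| ^ p ∂μ + ∫ ω, absRpowDeriv p (U ω) * (V ω - U ω) ∂μ ≤ ∫ ω, |V ω| ^ p ∂μ := by
  have hp0 : 0 < p := by linarith
  have hUp := (integrable_abs_rpow_iff_memLp hp0 hU.1).2 hU
  have hVp := (integrable_abs_rpow_iff_memLp hp0 hV.1).2 hV
  have hUV : Integrable (fun ω => absRpowDeriv p (U ω) * (V ω - U ω)) μ :=
    integrable_absRpowDeriv_comp_mul hp hU (hV.sub hU)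
  rw [← integral_add hUp hUV]
  exact integral_mono (hUp.add hUV) hVp fun ω => abs_rpow_add_absRpowDeriv_mul_sub_le hp _ _

lemma integral_absRpowDeriv_mul_add_nonneg [IsProbabilityMeasure μ] {p a : ℝ} (hp : 1 ≤ p)
    (ha : 1 ≤ a) {X Z : Ω → ℝ} (hXZ : IndepFun X Z μ) (hX : MemLp X (.ofReal p) μ)
    (hZ : MemLp Z (.ofReal p) μ) (hX0 : ∫ ω, X ω ∂μ = 0) (hZ0 : ∫ ω, Z ω ∂μ = 0) :
    0 ≤ ∫ ω, absRpowDeriv p ((a - 1) * X ω + a * Z ω) * (X ω + Z ω) ∂μ := by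
  have hmono := monotone_absRpowDeriv hp
  have hp1 : 1 ≤ ENNReal.ofReal p := ENNReal.one_le_ofReal.2 hp
  have hW₁ : MemLp (fun ω => a * Z ω + (a - 1) * X ω) (.ofReal p) μ :=
    (hZ.const_mul a).add (hX.const_mul (a - 1))
  have hW₂ : MemLp (fun ω => (a - 1) * X ω + a * Z ω) (.ofReal p) μ :=
    (hX.const_mul (a - 1)).add (hZ.const_mul a)
  have hWX_int := integrable_absRpowDeriv_comp_mul hp hW₁ hX
  have hWZ_int := integrable_absRpowDeriv_comp_mul hp hW₂ hZ
  have hWX : 0 ≤ ∫ ω, absRpowDeriv p (a * Z ω + (a - 1) * X ω) * X ω ∂μ :=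
    (hXZ.symm.comp (measurable_const_mul a) measurable_id).integral_comp_add_mul_mul_nonneg hmono
      (hX.integrable hp1) hX0 (by linarith) (integrable_absRpowDeriv_comp hp (hZ.const_mul a))
      hWX_int
  have hWZ : 0 ≤ ∫ ω, absRpowDeriv p ((a - 1) * X ω + a * Z ω) * Z ω ∂μ :=
    (hXZ.comp (measurable_const_mul (a - 1)) measurable_id).integral_comp_add_mul_mul_nonneg hmono
      (hZ.integrable hp1) hZ0 (by linarith)
      (integrable_absRpowDeriv_comp hp (hX.const_mul (a - 1))) hWZ_int
  calc 0 ≤ _ := add_nonneg hWX hWZ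
    _ = _ := by
      rw [← integral_add hWX_int hWZ_int]
      congr 1 with ω
      rw [add_comm (a * Z ω)]
      ring

end Integration

theorem lp_risk_monotone_above_one_general
    {Ω : Type*} [MeasureSpace Ω] [IsProbabilityMeasure (ℙ : Measure Ω)]
    (X Z : Ω → ℝ) (p : ℝ) (hp : 1 ≤ p)
    (hZmeas : Measurable Z)
    (hXint : Integrable X) (hXmean : ∫ ω, X ω = 0)
    (hXp : Integrable (fun ω => |X ω| ^ p))
    (hZ : Measure.map Z ℙ = gaussianReal 0 1)
    (hindep : IndepFun X Z)
    (g : ℝ → ℝ) (hg : ∀ t, g t = p * Real.sign t * |t| ^ (p - 1)) :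
    (∀ a ≥ (1 : ℝ),
        0 ≤ ∫ ω, g ((a - 1) * X ω + a * Z ω) * (X ω + Z ω)) ∧
      MonotoneOn (fun a : ℝ => ∫ ω, |X ω - a * (X ω + Z ω)| ^ p)
        (Set.Ici (1 : ℝ)) := by
  obtain rfl : g = absRpowDeriv p := funext hg
  have hp0 : 0 < p := by linarith
  have hZlaw : HasLaw Z (gaussianReal 0 1) := ⟨hZmeas.aemeasurable, hZ⟩
  have hXLp : MemLp X (.ofReal p) := (integrable_abs_rpow_iff_memLp hp0 hXint.1).1 hXp
  have hZLp : MemLp Z (.ofReal p) := hZlaw.memLp (memLp_id_gaussianReal' _ ENNReal.ofReal_ne_top)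
  have hZmean : ∫ ω, Z ω = 0 := hZlaw.integral_eq.trans integral_id_gaussianReal
  have hWLp (a : ℝ) : MemLp (fun ω => (a - 1) * X ω + a * Z ω) (.ofReal p) :=
    (hXLp.const_mul _).add (hZLp.const_mul a)
  have hderiv (a : ℝ) (ha : 1 ≤ a) :=
    integral_absRpowDeriv_mul_add_nonneg hp ha hindep hXLp hZLp hXmean hZmean
  refine ⟨hderiv, fun a ha b _ hab => ?_⟩
  have habs (c : ℝ) (ω : Ω) : |X ω - c * (X ω + Z ω)| = |(c - 1) * X ω + c * Z ω| := by
    rw [abs_sub_comm]; ring_nf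
  have hincr : ∫ ω, absRpowDeriv p ((a - 1) * X ω + a * Z ω)
        * ((b - 1) * X ω + b * Z ω - ((a - 1) * X ω + a * Z ω))
      = (b - a) * ∫ ω, absRpowDeriv p ((a - 1) * X ω + a * Z ω) * (X ω + Z ω) := by
    rw [← integral_const_mul]
    congr 1 with ω
    ring
  have htangent := integral_abs_rpow_add_integral_absRpowDeriv_mul_sub_le hp (hWLp a) (hWLp b)
  simp only [habs]
  nlinarith [mul_nonneg (sub_nonneg.2 hab) (hderiv a ha)]

theorem lp_risk_monotone_above_one
    {Ω : Type*} [MeasureSpace Ω] [IsProbabilityMeasure (ℙ : Measure Ω)]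
    (X Z : Ω → ℝ) (p : ℝ) (hp : 1 ≤ p)
    (hXmeas : Measurable X) (hZmeas : Measurable Z)
    (hXint : Integrable X) (hXmean : ∫ ω, X ω = 0)
    (hXp : Integrable (fun ω => |X ω| ^ p))
    (hZ : Measure.map Z ℙ = gaussianReal 0 1)
    (hindep : IndepFun X Z)
    (g : ℝ → ℝ) (hg : ∀ t, g t = p * Real.sign t * |t| ^ (p - 1)) :
    (∀ a ≥ (1 : ℝ),
        0 ≤ ∫ ω, g ((a - 1) * X ω + a * Z ω) * (X ω + Z ω)) ∧
      MonotoneOn (fun a : ℝ => ∫ ω, |X ω - a * (X ω + Z ω)| ^ p)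
        (Set.Ici (1 : ℝ)) :=
  lp_risk_monotone_above_one_general X Z p hp hZmeas hXint hXmean hXp hZ hindep g hg
end

section
/- Let k ≥ 0 and let μ(x) = Σ_{i=0}^k a_i x^i be a polynomial density (with respect to Lebesgue measure). Suppose ∫_{-∞}^∞ sign(t - x)·φ(t - x)·μ(x) dx = 0 for all t ∈ ℝ, where φ is the standard normal density. Then a_i = 0 for all i ≥ 1, i.e., μ is constant. -/
/-!
Substituting `s = t - x` and Taylor-expanding `p (t - s)` at `t` turns the hypothesis into the
polynomial identity `∑ₙ (-1)ⁿ εₙ p⁽ⁿ⁾(t) / n! = 0` in `t`, where `εₙ = ∫ sⁿ sign(s) φ(s) ds`.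
Since `ε₀ = 0` (the kernel is odd) and `ε₁ > 0`, the coefficient of `t^(d-1)`, with `d = deg p ≥ 1`,
is `-ε₁ d` times the leading coefficient of `p`, which is therefore zero: `p` is constant.
-/

open MeasureTheory ProbabilityTheory Real
open Polynomial Finset

theorem Polynomial.natDegree_eq_zero_of_sum_C_mul_hasseDeriv_eq_zero {R : Type*} [CommRing R]
    [IsDomain R] [CharZero R] {m : ℕ → R} (h0 : m 0 = 0) (h1 : m 1 ≠ 0) {p : R[X]}
    (h : ∑ n ∈ range (p.natDegree + 1), C (m n) * hasseDeriv n p = 0) : p.natDegree = 0 := by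
  by_contra hd
  set d := p.natDegree with hd_def
  have hcoeff := congrArg (coeff · (d - 1)) h
  simp only [finsetSum_coeff, coeff_C_mul, hasseDeriv_coeff, coeff_zero] at hcoeff
  rw [sum_eq_single 1] at hcoeff
  · rw [Nat.sub_add_cancel (by omega), Nat.choose_one_right] at hcoeff
    have hlead : p.coeff d = 0 := by simpa [h1, hd] using hcoeff
    exact hd (by rw [hd_def, leadingCoeff_eq_zero.mp hlead, natDegree_zero])
  · intro n _ hn1
    rcases Nat.lt_or_ge n 2 with hn | hn
    · simp [show n = 0 by omega, h0]
    · simp [coeff_eq_zero_of_natDegree_lt (show d < d - 1 + n by omega)]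
  · exact fun h1' => absurd (mem_range.mpr (by omega)) h1'

theorem integral_mul_eval_sub_eq_eval_sum_hasseDeriv {g : ℝ → ℝ}
    (hg : ∀ n : ℕ, Integrable fun s => s ^ n * g s) (p : ℝ[X]) (t : ℝ) :
    ∫ x, g (t - x) * p.eval x =
      (∑ n ∈ range (p.natDegree + 1), C ((-1) ^ n * ∫ s, s ^ n * g s) * hasseDeriv n p).eval t := by
  have taylor_expand : ∀ s, p.eval (t - s) =
      ∑ n ∈ range (p.natDegree + 1), (-1) ^ n * (hasseDeriv n p).eval t * s ^ n := by
    intro s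
    rw [sub_eq_neg_add, ← taylor_eval,
      eval_eq_sum_range' (n := p.natDegree + 1) (by rw [natDegree_taylor]; omega)]
    exact sum_congr rfl fun n _ => by rw [taylor_coeff, neg_pow]; ring
  calc ∫ x, g (t - x) * p.eval x = ∫ s, g s * p.eval (t - s) := by
        rw [← integral_sub_left_eq_self _ _ t]; simp only [sub_sub_cancel]
    _ = ∫ s, ∑ n ∈ range (p.natDegree + 1),
          (-1) ^ n * (hasseDeriv n p).eval t * (s ^ n * g s) := by
        simp only [taylor_expand, mul_sum]
        exact integral_congr_ae (ae_of_all _ fun s => sum_congr rfl fun n _ => by ring)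
    _ = _ := by
        rw [integral_finsetSum _ fun n _ => (hg n).const_mul _]
        simp only [integral_const_mul, eval_finsetSum, eval_mul, eval_C]
        exact sum_congr rfl fun n _ => by ring

theorem natDegree_eq_zero_of_integral_mul_eval_sub_eq_zero {g : ℝ → ℝ}
    (hg : ∀ n : ℕ, Integrable fun s => s ^ n * g s) (h0 : ∫ s, g s = 0) (h1 : ∫ s, s * g s ≠ 0)
    {p : ℝ[X]} (hp : ∀ t, ∫ x, g (t - x) * p.eval x = 0) : p.natDegree = 0 :=
  natDegree_eq_zero_of_sum_C_mul_hasseDeriv_eq_zero (m := fun n => (-1) ^ n * ∫ s, s ^ n * g s)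
    (by simpa using h0) (by simpa using h1)
    (Polynomial.funext fun t => by
      simpa [integral_mul_eval_sub_eq_eval_sum_hasseDeriv hg] using hp t)

theorem Real.measurable_sign : Measurable Real.sign :=
  Measurable.ite measurableSet_Iio measurable_const
    (Measurable.ite measurableSet_Ioi measurable_const measurable_const)

namespace ProbabilityTheory

theorem integrable_pow_mul_gaussianPDFReal (μ : ℝ) (v : NNReal) (n : ℕ) :
    Integrable fun x => x ^ n * gaussianPDFReal μ v x := by
  rcases eq_or_ne v 0 with rfl | hv
  · simp [gaussianPDFReal_zero_var]
  have h := (memLp_id_gaussianReal (μ := μ) (v := v) n).integrable_norm_pow'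
  rw [gaussianReal_of_var_ne_zero _ hv, integrable_withDensity_iff_integrable_smul'
    (measurable_gaussianPDF _ _) (ae_of_all _ fun _ => gaussianPDF_lt_top)] at h
  rw [← integrable_norm_iff (by fun_prop)]
  refine h.congr (ae_of_all _ fun x => ?_)
  simp [toReal_gaussianPDF, abs_of_nonneg (gaussianPDFReal_nonneg μ v x), mul_comm]

theorem integrable_pow_mul_sign_mul_gaussianPDFReal (μ : ℝ) (v : NNReal) (n : ℕ) :
    Integrable fun x => x ^ n * (Real.sign x * gaussianPDFReal μ v x) := by
  refine ((integrable_pow_mul_gaussianPDFReal μ v n).bdd_mul (c := 1)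
    Real.measurable_sign.aestronglyMeasurable (ae_of_all _ fun x => ?_)).congr
    (ae_of_all _ fun x => by ring)
  rcases Real.sign_apply_eq x with h | h | h <;> simp [h]

theorem integral_sign_mul_gaussianPDFReal_zero (v : NNReal) :
    ∫ x, Real.sign x * gaussianPDFReal 0 v x = 0 := by
  have hodd : ∀ x, Real.sign (-x) * gaussianPDFReal 0 v (-x) =
      -(Real.sign x * gaussianPDFReal 0 v x) := fun x => by
    simp [Real.sign_neg, gaussianPDFReal_def]
  have := integral_neg_eq_self (fun x => Real.sign x * gaussianPDFReal 0 v x) volume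
  simp only [hodd, integral_neg] at this
  linarith

theorem integral_mul_sign_mul_gaussianPDFReal_pos (μ : ℝ) {v : NNReal} (hv : v ≠ 0) :
    0 < ∫ x, x * (Real.sign x * gaussianPDFReal μ v x) := by
  have hnonneg : 0 ≤ fun x => x * (Real.sign x * gaussianPDFReal μ v x) := fun x => by
    show 0 ≤ x * (Real.sign x * gaussianPDFReal μ v x)
    rw [← mul_assoc, mul_comm x]
    exact mul_nonneg (Real.sign_mul_nonneg x) (gaussianPDFReal_nonneg μ v x)
  rw [integral_pos_iff_support_of_nonneg hnonneg
    (by simpa using integrable_pow_mul_sign_mul_gaussianPDFReal μ v 1)]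
  refine (measure_mono fun x (hx : x ∈ Set.Ioi 0) => ?_).trans_lt' (by simp)
  have := gaussianPDFReal_pos μ v x hv
  simp only [Function.mem_support, Real.sign_of_pos hx, one_mul]
  exact (mul_pos hx this).ne'

end ProbabilityTheory

theorem polynomial_density_convolution_constant
    (k : ℕ) (a : ℕ → ℝ)
    (hconv : ∀ t : ℝ,
      ∫ x : ℝ, Real.sign (t - x) * gaussianPDFReal 0 1 (t - x) *
        (∑ i ∈ Finset.range (k + 1), a i * x ^ i) = 0) :
    ∀ i : ℕ, 1 ≤ i → i ≤ k → a i = 0 := by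
  set p : ℝ[X] := ∑ i ∈ range (k + 1), C (a i) * X ^ i
  have hp : p.natDegree = 0 :=
    natDegree_eq_zero_of_integral_mul_eval_sub_eq_zero
      (integrable_pow_mul_sign_mul_gaussianPDFReal 0 1) (integral_sign_mul_gaussianPDFReal_zero 1)
      (integral_mul_sign_mul_gaussianPDFReal_pos 0 one_ne_zero).ne'
      fun t => by simpa [p, eval_finsetSum] using hconv t
  intro i hi hik
  have := coeff_eq_zero_of_natDegree_lt (hp ▸ hi : p.natDegree < i)
  simpa [p, finsetSum_coeff, coeff_C_mul_X_pow, hik] using this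
end

section
/- Let X be a probability measure on ℝ, φ the standard normal density, a ∈ (0,1). Then E[sign(X - ay)·φ(y - X)] = 0 for a.e. y ∈ ℝ if and only if ∫ sign(x - y)·φ(y - x) dμ(x) = 0 for a.e. y ∈ ℝ, where μ(dx) = exp((1-a)x²/2) P_X(√a dx) is the pushforward of P_X under x ↦ x/√a reweighted by exp((1-a)x²/2). -/
/-!
Substituting `x = u / √a` in the `μ`-integral, the factorisation
`exp ((1 - a) (u/√a)² / 2) φ(y - u/√a) = exp ((1 - a) y² / (2a)) φ(y/√a - u)` and
`sign (u/√a - y) = sign (u - a (y/√a))` turn the second integral at `y` into a nonvanishing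
exponential times the first integral at `y / √a`; and `y ↦ y / √a` preserves Lebesgue-null sets.
-/

open MeasureTheory ProbabilityTheory Real

theorem Real.sign_div_of_pos {c : ℝ} (hc : 0 < c) (x : ℝ) : sign (x / c) = sign x := by
  rcases lt_trichotomy x 0 with hx | rfl | hx
  · rw [sign_of_neg hx, sign_of_neg (div_neg_of_neg_of_pos hx hc)]
  · simp
  · rw [sign_of_pos hx, sign_of_pos (div_pos hx hc)]

theorem Real.ae_comp_div_const_iff {c : ℝ} (hc : c ≠ 0) {p : ℝ → Prop} :
    (∀ᵐ y, p (y / c)) ↔ ∀ᵐ y, p y := by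
  simp_rw [div_eq_mul_inv]
  rw [← (measurableEmbedding_mulRight₀ (inv_ne_zero hc)).ae_map_iff,
    map_volume_mul_right (inv_ne_zero hc),
    Measure.ae_ennreal_smul_measure_iff (by simpa using hc)]

theorem MeasurableEmbedding.integral_withDensity_ofReal_map {α β E : Type*} [MeasurableSpace α]
    [MeasurableSpace β] [NormedAddCommGroup E] [NormedSpace ℝ E] {μ : Measure α} {g : α → β}
    (hg : MeasurableEmbedding g) {w : β → ℝ} (hw : Measurable w) (hw₀ : ∀ y, 0 ≤ w y)
    (f : β → E) :
    ∫ y, f y ∂(μ.map g).withDensity (fun y => ENNReal.ofReal (w y)) =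
      ∫ x, w (g x) • f (g x) ∂μ := by
  rw [integral_withDensity_eq_integral_toReal_smul hw.ennreal_ofReal
    (ae_of_all _ fun _ => ENNReal.ofReal_lt_top), hg.integral_map]
  simp_rw [ENNReal.toReal_ofReal (hw₀ _)]

theorem exp_mul_gaussianPDFReal_sub_div_sqrt {a : ℝ} (ha : 0 < a) (x y : ℝ) :
    exp ((1 - a) * (x / √a) ^ 2 / 2) * gaussianPDFReal 0 1 (y - x / √a) =
      exp ((1 - a) * y ^ 2 / (2 * a)) * gaussianPDFReal 0 1 (y / √a - x) := by
  obtain ⟨c, hc, rfl⟩ : ∃ c, 0 < c ∧ c ^ 2 = a := ⟨√a, sqrt_pos.2 ha, sq_sqrt ha.le⟩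
  rw [sqrt_sq hc.le]
  simp only [gaussianPDFReal, NNReal.coe_one, mul_one, sub_zero]
  rw [mul_left_comm, ← exp_add, mul_left_comm (exp _), ← exp_add]
  congr 2
  field_simp
  ring

theorem integral_sign_mul_gaussianPDFReal_withDensity_map_div_sqrt (P : Measure ℝ) {a : ℝ}
    (ha : 0 < a) (y : ℝ) :
    ∫ x, sign (x - y) * gaussianPDFReal 0 1 (y - x)
        ∂((P.map fun x => x / √a).withDensity
            fun x => ENNReal.ofReal (exp ((1 - a) * x ^ 2 / 2))) =
      exp ((1 - a) * y ^ 2 / (2 * a)) *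
        ∫ x, sign (x - a * (y / √a)) * gaussianPDFReal 0 1 (y / √a - x) ∂P := by
  have hc : 0 < √a := sqrt_pos.2 ha
  have hdiv : MeasurableEmbedding fun x : ℝ => x / √a := by
    simpa only [div_eq_mul_inv] using measurableEmbedding_mulRight₀ (inv_ne_zero hc.ne')
  rw [hdiv.integral_withDensity_ofReal_map (by fun_prop) (fun _ => (exp_pos _).le),
    ← integral_const_mul]
  congr 1 with x
  have hsub : x / √a - y = (x - a * (y / √a)) / √a := by
    field_simp
    linear_combination (-y) * mul_self_sqrt ha.le
  rw [smul_eq_mul, hsub, sign_div_of_pos hc, mul_left_comm,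
    exp_mul_gaussianPDFReal_sub_div_sqrt ha, mul_left_comm]

theorem equivalent_convolution_condition_general
    (P : Measure ℝ) (a : ℝ) (ha : 0 < a) :
    (∀ᵐ y ∂(volume : Measure ℝ),
        ∫ x, Real.sign (x - a * y) * gaussianPDFReal 0 1 (y - x) ∂P = 0) ↔
      (∀ᵐ y ∂(volume : Measure ℝ),
        ∫ x, Real.sign (x - y) * gaussianPDFReal 0 1 (y - x)
          ∂((Measure.map (fun x => x / Real.sqrt a) P).withDensity
              fun x => ENNReal.ofReal (Real.exp ((1 - a) * x ^ 2 / 2))) = 0) := by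
  simp_rw [integral_sign_mul_gaussianPDFReal_withDensity_map_div_sqrt P ha, mul_eq_zero,
    exp_ne_zero, false_or]
  exact (ae_comp_div_const_iff (sqrt_pos.2 ha).ne').symm

theorem equivalent_convolution_condition
    (P : Measure ℝ) [IsProbabilityMeasure P] (a : ℝ) (ha : 0 < a) (ha1 : a < 1) :
    (∀ᵐ y ∂(volume : Measure ℝ),
        ∫ x, Real.sign (x - a * y) * gaussianPDFReal 0 1 (y - x) ∂P = 0) ↔
      (∀ᵐ y ∂(volume : Measure ℝ),
        ∫ x, Real.sign (x - y) * gaussianPDFReal 0 1 (y - x)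
          ∂((Measure.map (fun x => x / Real.sqrt a) P).withDensity
              fun x => ENNReal.ofReal (Real.exp ((1 - a) * x ^ 2 / 2))) = 0) :=
  equivalent_convolution_condition_general P a ha
end

section
/- For p ∈ (0,∞), the function f_p(w) = ∫₀^∞ x^{p-1} e^{-x²} sin(wx) dx is smooth on ℝ and satisfies the ODE 2f_p''(w) + (p-1)f_p(w) + (w·f_p(w))' = 0 for all w ∈ ℝ. -/
open MeasureTheory Real Set

-- basic integrability
lemma integ_aux {s : ℝ} (hs : -1 < s) :
    IntegrableOn (fun x : ℝ => x ^ s * Real.exp (-x ^ 2)) (Ioi 0) := by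
  have := integrableOn_rpow_mul_exp_neg_mul_sq (b := 1) one_pos hs
  simpa using this

lemma integ_aux' {s : ℝ} (hs : -1 < s) (g : ℝ → ℝ) (hg : Continuous g)
    (hgb : ∀ x, |g x| ≤ 1) :
    IntegrableOn (fun x : ℝ => x ^ s * Real.exp (-x ^ 2) * g x) (Ioi 0) := by
  apply Integrable.mono' (integ_aux hs)
  · apply ContinuousOn.aestronglyMeasurable _ measurableSet_Ioi
    exact ((continuousOn_id.rpow_const (fun x hx => Or.inl (ne_of_gt hx))).mul
      (Real.continuous_exp.comp (continuous_neg.comp (continuous_pow 2))).continuousOn).mul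
      hg.continuousOn
  · filter_upwards [self_mem_ae_restrict measurableSet_Ioi] with x hx
    have hx0 : (0:ℝ) < x := hx
    have h1 : |x ^ s * Real.exp (-x ^ 2) * g x| = x ^ s * Real.exp (-x ^ 2) * |g x| := by
      rw [abs_mul, abs_of_nonneg (by positivity)]
    rw [Real.norm_eq_abs, h1]
    calc x ^ s * Real.exp (-x ^ 2) * |g x| ≤ x ^ s * Real.exp (-x ^ 2) * 1 := by
          apply mul_le_mul_of_nonneg_left (hgb x) (by positivity)
      _ = x ^ s * Real.exp (-x ^ 2) := mul_one _

/-- `f_p(w) = ∫₀^∞ x^{p-1} e^{-x²} sin(wx) dx`. -/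
noncomputable def fp (p : ℝ) (w : ℝ) : ℝ :=
  ∫ x in Set.Ioi (0 : ℝ), x ^ (p - 1) * Real.exp (-x ^ 2) * Real.sin (w * x)

noncomputable def FF (p : ℝ) (n : ℕ) (w : ℝ) : ℝ :=
  ∫ x in Ioi (0:ℝ), x ^ (p - 1 + n) * Real.exp (-x ^ 2) * Real.sin (w * x + n * (π / 2))

lemma FF_integrand_integrable (p : ℝ) (hp : 0 < p) (n : ℕ) (w : ℝ) :
    IntegrableOn (fun x : ℝ => x ^ (p - 1 + n) * Real.exp (-x ^ 2) *
      Real.sin (w * x + n * (π / 2))) (Ioi 0) := by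
  exact integ_aux' (by push_cast; linarith [Nat.cast_nonneg (α := ℝ) n])
    (fun x => Real.sin (w * x + n * (π / 2)))
    (Real.continuous_sin.comp (by continuity)) (fun x => Real.abs_sin_le_one _)

lemma hasDerivAt_FF (p : ℝ) (hp : 0 < p) (n : ℕ) (w : ℝ) :
    HasDerivAt (FF p n) (FF p (n + 1) w) w := by
  have key := hasDerivAt_integral_of_dominated_loc_of_deriv_le
    (μ := volume.restrict (Ioi (0:ℝ))) (x₀ := w)
    (F := fun w x => x ^ (p - 1 + n) * Real.exp (-x ^ 2) * Real.sin (w * x + n * (π / 2)))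
    (F' := fun w x => x ^ (p - 1 + n + 1) * Real.exp (-x ^ 2) * Real.cos (w * x + n * (π / 2)))
    (bound := fun x => x ^ (p - 1 + n + 1) * Real.exp (-x ^ 2))
    (s := Metric.ball w 1) (Metric.ball_mem_nhds w one_pos) ?_ ?_ ?_ ?_ ?_ ?_
  · obtain ⟨-, hd⟩ := key
    have : FF p (n+1) w = ∫ x in Ioi (0:ℝ),
        x ^ (p - 1 + n + 1) * Real.exp (-x ^ 2) * Real.cos (w * x + n * (π / 2)) := by
      unfold FF
      apply setIntegral_congr_fun measurableSet_Ioi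
      intro x hx
      simp only [Nat.cast_add, Nat.cast_one]
      rw [show w * x + ((n:ℝ)+1) * (π / 2) = (w * x + n * (π / 2)) + π / 2 by ring,
        Real.sin_add_pi_div_two, show p - 1 + ((n:ℝ)+1) = p - 1 + (n:ℝ) + 1 by ring]
    rw [this]
    exact hd
  · filter_upwards with w'
    exact ((FF_integrand_integrable p hp n w').aestronglyMeasurable)
  · exact FF_integrand_integrable p hp n w
  · apply ContinuousOn.aestronglyMeasurable _ measurableSet_Ioi
    exact ((continuousOn_id.rpow_const (fun x hx => Or.inl (ne_of_gt hx))).mul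
      (Real.continuous_exp.comp (continuous_neg.comp (continuous_pow 2))).continuousOn).mul
      (Real.continuous_cos.comp (by continuity)).continuousOn
  · filter_upwards [self_mem_ae_restrict measurableSet_Ioi] with x hx w' _
    have hx0 : (0:ℝ) < x := hx
    rw [Real.norm_eq_abs, abs_mul, abs_of_nonneg (by positivity : (0:ℝ) ≤ x ^ (p-1+n+1) * Real.exp (-x^2))]
    calc x ^ (p-1+n+1) * Real.exp (-x^2) * |Real.cos (w' * x + n * (π / 2))|
        ≤ x ^ (p-1+n+1) * Real.exp (-x^2) * 1 :=
          mul_le_mul_of_nonneg_left (Real.abs_cos_le_one _) (by positivity)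
      _ = _ := mul_one _
  · exact integ_aux (by push_cast; linarith [Nat.cast_nonneg (α := ℝ) n])
  · filter_upwards [self_mem_ae_restrict measurableSet_Ioi] with x hx w' _
    have hx0 : (0:ℝ) < x := hx
    have h1 : HasDerivAt (fun w' : ℝ => w' * x + n * (π / 2)) x w' := by
      simpa using ((hasDerivAt_id w').mul_const x).add_const (n * (π / 2))
    have h2 : HasDerivAt (fun w' : ℝ => Real.sin (w' * x + n * (π / 2)))
        (Real.cos (w' * x + n * (π / 2)) * x) w' :=
      (Real.hasDerivAt_sin _).comp w' h1
    have h3 := h2.const_mul (x ^ (p - 1 + n) * Real.exp (-x ^ 2))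
    refine h3.congr_deriv ?_
    rw [Real.rpow_add_one (ne_of_gt hx0)]
    ring

lemma deriv_FF (p : ℝ) (hp : 0 < p) (n : ℕ) :
    deriv (FF p n) = FF p (n + 1) :=
  funext fun w => (hasDerivAt_FF p hp n w).deriv

lemma abs_cexp (z : ℂ) : ‖Complex.exp z‖ = Real.exp z.re := by
  rw [Complex.norm_exp]

lemma norm_csin_le (z : ℂ) : ‖Complex.sin z‖ ≤ Real.exp |z.im| := by
  rw [Complex.sin]
  have h1 : (-z * Complex.I).re = z.im := by simp [Complex.mul_re]
  have h2 : (z * Complex.I).re = -z.im := by simp [Complex.mul_re]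
  calc ‖(Complex.exp (-z * Complex.I) - Complex.exp (z * Complex.I)) * Complex.I / 2‖
      = ‖Complex.exp (-z * Complex.I) - Complex.exp (z * Complex.I)‖ / 2 := by
        simp [norm_div, norm_mul]
    _ ≤ (‖Complex.exp (-z * Complex.I)‖ + ‖Complex.exp (z * Complex.I)‖) / 2 := by
        gcongr; exact norm_sub_le _ _
    _ ≤ (Real.exp |z.im| + Real.exp |z.im|) / 2 := by
        rw [abs_cexp, abs_cexp, h1, h2]
        gcongr <;> [exact le_abs_self _; exact neg_le_abs _]
    _ = Real.exp |z.im| := by ring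

lemma norm_ccos_le (z : ℂ) : ‖Complex.cos z‖ ≤ Real.exp |z.im| := by
  rw [Complex.cos]
  have h1 : (-z * Complex.I).re = z.im := by simp [Complex.mul_re]
  have h2 : (z * Complex.I).re = -z.im := by simp [Complex.mul_re]
  calc ‖(Complex.exp (z * Complex.I) + Complex.exp (-z * Complex.I)) / 2‖
      = ‖Complex.exp (z * Complex.I) + Complex.exp (-z * Complex.I)‖ / 2 := by
        simp [norm_div]
    _ ≤ (‖Complex.exp (z * Complex.I)‖ + ‖Complex.exp (-z * Complex.I)‖) / 2 := by
        gcongr; exact norm_add_le _ _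
    _ ≤ (Real.exp |z.im| + Real.exp |z.im|) / 2 := by
        rw [abs_cexp, abs_cexp, h1, h2]
        gcongr <;> [exact neg_le_abs _; exact le_abs_self _]
    _ = Real.exp |z.im| := by ring

lemma integ_exp {s : ℝ} (hs : -1 < s) (c : ℝ) :
    IntegrableOn (fun x : ℝ => x ^ s * Real.exp (-x ^ 2) * Real.exp (c * x)) (Ioi 0) := by
  have base := (integrableOn_rpow_mul_exp_neg_mul_sq (b := 1/2) (by norm_num) hs).const_mul
    (Real.exp (c ^ 2 / 2))
  apply Integrable.mono' base
  · apply ContinuousOn.aestronglyMeasurable _ measurableSet_Ioi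
    exact ((continuousOn_id.rpow_const (fun x hx => Or.inl (ne_of_gt hx))).mul
      (Real.continuous_exp.comp (continuous_neg.comp (continuous_pow 2))).continuousOn).mul
      (Real.continuous_exp.comp (continuous_const.mul continuous_id)).continuousOn
  · filter_upwards [self_mem_ae_restrict measurableSet_Ioi] with x hx
    have hx0 : (0:ℝ) < x := hx
    rw [Real.norm_eq_abs, abs_of_nonneg (by positivity)]
    rw [mul_assoc, ← Real.exp_add, mul_comm (Real.exp (c ^ 2 / 2)), mul_assoc, ← Real.exp_add]
    apply mul_le_mul_of_nonneg_left _ (by positivity)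
    apply Real.exp_le_exp.2
    nlinarith [sq_nonneg (c - x)]

noncomputable def Gc (p : ℝ) (z : ℂ) : ℂ :=
  ∫ x in Ioi (0:ℝ), ((x ^ (p - 1) * Real.exp (-x ^ 2) : ℝ) : ℂ) * Complex.sin (z * x)

lemma meas_helper (p : ℝ) (g : ℝ → ℂ) (hg : Continuous g) :
    AEStronglyMeasurable (fun x : ℝ => ((x ^ (p - 1) * Real.exp (-x ^ 2) : ℝ) : ℂ) * g x)
      (volume.restrict (Ioi 0)) := by
  apply ContinuousOn.aestronglyMeasurable _ measurableSet_Ioi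
  exact (Complex.continuous_ofReal.comp_continuousOn
    ((continuousOn_id.rpow_const (fun x hx => Or.inl (ne_of_gt hx))).mul
      (Real.continuous_exp.comp (continuous_neg.comp (continuous_pow 2))).continuousOn)).mul
    hg.continuousOn

lemma Gc_integrand_integrable (p : ℝ) (hp : 0 < p) (z : ℂ) :
    Integrable (fun x : ℝ => ((x ^ (p - 1) * Real.exp (-x ^ 2) : ℝ) : ℂ) * Complex.sin (z * x))
      (volume.restrict (Ioi 0)) := by
  apply Integrable.mono' (integ_exp (s := p - 1) (by linarith) |z.im|)
  · exact meas_helper p _ (Complex.continuous_sin.comp (by continuity))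
  · filter_upwards [self_mem_ae_restrict measurableSet_Ioi] with x hx
    have hx0 : (0:ℝ) < x := hx
    rw [norm_mul, Complex.norm_real, Real.norm_eq_abs, abs_of_nonneg (by positivity)]
    have him : (z * (x:ℂ)).im = z.im * x := by simp [Complex.mul_im]
    calc x ^ (p-1) * Real.exp (-x^2) * ‖Complex.sin (z * x)‖
        ≤ x ^ (p-1) * Real.exp (-x^2) * Real.exp |(z * (x:ℂ)).im| :=
          mul_le_mul_of_nonneg_left (norm_csin_le _) (by positivity)
      _ = x ^ (p-1) * Real.exp (-x^2) * Real.exp (|z.im| * x) := by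
          rw [him, abs_mul, abs_of_nonneg hx0.le]

lemma Gc_differentiable (p : ℝ) (hp : 0 < p) : Differentiable ℂ (Gc p) := by
  intro z₀
  have key := hasDerivAt_integral_of_dominated_loc_of_deriv_le
    (μ := volume.restrict (Ioi (0:ℝ))) (x₀ := z₀) (s := Metric.ball z₀ 1)
    (F := fun z (x : ℝ) => ((x ^ (p - 1) * Real.exp (-x ^ 2) : ℝ) : ℂ) * Complex.sin (z * x))
    (F' := fun z (x : ℝ) => ((x ^ (p - 1) * Real.exp (-x ^ 2) : ℝ) : ℂ) *
      (Complex.cos (z * x) * x))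
    (bound := fun x : ℝ => x ^ (p - 1 + 1) * Real.exp (-x ^ 2) * Real.exp ((|z₀.im| + 1) * x))
    (Metric.ball_mem_nhds z₀ one_pos) ?_ ?_ ?_ ?_ ?_ ?_
  · exact key.2.differentiableAt
  · filter_upwards with z
    exact (Gc_integrand_integrable p hp z).aestronglyMeasurable
  · exact Gc_integrand_integrable p hp z₀
  · exact meas_helper p _ ((Complex.continuous_cos.comp (by continuity)).mul
      Complex.continuous_ofReal)
  · filter_upwards [self_mem_ae_restrict measurableSet_Ioi] with x hx z hz
    have hx0 : (0:ℝ) < x := hx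
    have him : (z * (x:ℂ)).im = z.im * x := by simp [Complex.mul_im]
    have himz : |z.im| ≤ |z₀.im| + 1 := by
      have : |(z - z₀).im| ≤ ‖z - z₀‖ := Complex.abs_im_le_norm _
      have h2 : ‖z - z₀‖ < 1 := by rwa [← dist_eq_norm, ← Metric.mem_ball]
      have h3 : |z.im| ≤ |z₀.im| + |(z - z₀).im| := by
        have : z.im = z₀.im + (z - z₀).im := by simp
        rw [this]; exact abs_add_le _ _
      linarith
    rw [norm_mul, norm_mul, Complex.norm_real, Real.norm_eq_abs,
      abs_of_nonneg (by positivity : (0:ℝ) ≤ x ^ (p-1) * Real.exp (-x^2)),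
      Complex.norm_real, Real.norm_eq_abs, abs_of_nonneg hx0.le]
    calc x ^ (p-1) * Real.exp (-x^2) * (‖Complex.cos (z * x)‖ * x)
        ≤ x ^ (p-1) * Real.exp (-x^2) * (Real.exp ((|z₀.im| + 1) * x) * x) := by
          apply mul_le_mul_of_nonneg_left _ (by positivity)
          apply mul_le_mul_of_nonneg_right _ hx0.le
          refine (norm_ccos_le _).trans (Real.exp_le_exp.2 ?_)
          rw [him, abs_mul, abs_of_nonneg hx0.le]
          exact mul_le_mul_of_nonneg_right himz hx0.le
      _ = x ^ (p-1+1) * Real.exp (-x^2) * Real.exp ((|z₀.im| + 1) * x) := by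
          rw [Real.rpow_add_one (ne_of_gt hx0)]; ring
  · exact integ_exp (by linarith) _
  · filter_upwards [self_mem_ae_restrict measurableSet_Ioi] with x hx z hz
    have h1 : HasDerivAt (fun z : ℂ => z * (x:ℂ)) (x:ℂ) z := hasDerivAt_mul_const _
    have h2 : HasDerivAt (fun z : ℂ => Complex.sin (z * x))
        (Complex.cos (z * x) * x) z := (Complex.hasDerivAt_sin _).comp z h1
    exact h2.const_mul _

lemma fp_eq_re (p : ℝ) (w : ℝ) : fp p w = (Gc p w).re := by
  unfold fp Gc
  rw [setIntegral_congr_fun measurableSet_Ioi (g := fun x : ℝ =>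
      ((x ^ (p - 1) * Real.exp (-x ^ 2) * Real.sin (w * x) : ℝ) : ℂ)) ?_]
  · have h := integral_ofReal (𝕜 := ℂ) (μ := volume.restrict (Ioi 0))
      (f := fun x : ℝ => x ^ (p - 1) * Real.exp (-x ^ 2) * Real.sin (w * x))
    calc ∫ x in Ioi (0:ℝ), x ^ (p - 1) * Real.exp (-x ^ 2) * Real.sin (w * x)
        = (((∫ x in Ioi (0:ℝ), x ^ (p - 1) * Real.exp (-x ^ 2) * Real.sin (w * x) : ℝ)) : ℂ).re :=
          (Complex.ofReal_re _).symm
      _ = _ := congrArg Complex.re h.symm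
  · intro x hx
    dsimp only
    rw [← Complex.ofReal_mul, ← Complex.ofReal_sin]
    push_cast
    ring

lemma fp_contDiff (p : ℝ) (hp : 0 < p) : ContDiff ℝ (⊤ : ℕ∞) (fp p) := by
  have h1 : AnalyticOnNhd ℂ (Gc p) Set.univ :=
    Complex.analyticOnNhd_univ_iff_differentiable.2 (Gc_differentiable p hp)
  have h2 : AnalyticOnNhd ℝ (Gc p) Set.univ := h1.restrictScalars
  have h3 : ContDiff ℝ (⊤ : ℕ∞) (Gc p) := h2.contDiff
  have h4 : fp p = fun w : ℝ => Complex.reCLM (Gc p (Complex.ofRealCLM w)) := by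
    funext w; simpa using fp_eq_re p w
  rw [h4]
  exact Complex.reCLM.contDiff.comp (h3.comp Complex.ofRealCLM.contDiff)

lemma fp_eq_FF (p : ℝ) : fp p = FF p 0 := by
  funext w
  unfold fp FF
  norm_num

lemma ode_key (p : ℝ) (hp : 0 < p) (w : ℝ) :
    2 * FF p 2 w + p * FF p 0 w + w * FF p 1 w = 0 := by
  have sincont : Continuous (fun x : ℝ => Real.sin (w * x)) :=
    Real.continuous_sin.comp (by continuity)
  have coscont : Continuous (fun x : ℝ => Real.cos (w * x)) :=
    Real.continuous_cos.comp (by continuity)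
  have t0 : IntegrableOn (fun x : ℝ => x ^ (p - 1) * Real.exp (-x ^ 2) * Real.sin (w * x))
      (Ioi 0) := integ_aux' (by linarith) _ sincont (fun x => Real.abs_sin_le_one _)
  have t2 : IntegrableOn (fun x : ℝ => x ^ (p + 1) * Real.exp (-x ^ 2) * Real.sin (w * x))
      (Ioi 0) := integ_aux' (by linarith) _ sincont (fun x => Real.abs_sin_le_one _)
  have t1 : IntegrableOn (fun x : ℝ => x ^ p * Real.exp (-x ^ 2) * Real.cos (w * x))
      (Ioi 0) := integ_aux' (by linarith) _ coscont (fun x => Real.abs_cos_le_one _)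
  -- FTC
  have hg0 : ContinuousWithinAt (fun x : ℝ => x ^ p * Real.exp (-x ^ 2) * Real.sin (w * x))
      (Ici 0) 0 := by
    apply ContinuousWithinAt.mul
    apply ContinuousWithinAt.mul
    · exact continuousWithinAt_id.rpow_const (Or.inr hp.le)
    · exact (Real.continuous_exp.comp (continuous_neg.comp (continuous_pow 2))).continuousWithinAt
    · exact sincont.continuousWithinAt
  have hgderiv : ∀ x ∈ Ioi (0:ℝ),
      HasDerivAt (fun x : ℝ => x ^ p * Real.exp (-x ^ 2) * Real.sin (w * x))
      (p * (x ^ (p - 1) * Real.exp (-x ^ 2) * Real.sin (w * x))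
        - 2 * (x ^ (p + 1) * Real.exp (-x ^ 2) * Real.sin (w * x))
        + w * (x ^ p * Real.exp (-x ^ 2) * Real.cos (w * x))) x := by
    intro x hx
    have hx0 : (0:ℝ) < x := hx
    have h1 : HasDerivAt (fun x : ℝ => x ^ p) (p * x ^ (p - 1)) x :=
      Real.hasDerivAt_rpow_const (Or.inl (ne_of_gt hx0))
    have h2 : HasDerivAt (fun x : ℝ => Real.exp (-x ^ 2)) (Real.exp (-x ^ 2) * (-(2 * x))) x := by
      have hsq : HasDerivAt (fun x : ℝ => -x ^ 2) (-(2 * x)) x := by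
        simpa using (hasDerivAt_pow 2 x).fun_neg
      exact (Real.hasDerivAt_exp _).comp x hsq
    have h3 : HasDerivAt (fun x : ℝ => Real.sin (w * x)) (Real.cos (w * x) * w) x :=
      (Real.hasDerivAt_sin _).comp x (by simpa using (hasDerivAt_id x).const_mul w)
    have h := (h1.fun_mul h2).fun_mul h3
    refine h.congr_deriv ?_
    rw [show p + 1 = (p - 1) + 1 + 1 by ring, Real.rpow_add_one (ne_of_gt hx0),
      Real.rpow_add_one (ne_of_gt hx0), show p = (p - 1) + 1 by ring,
      Real.rpow_add_one (ne_of_gt hx0)]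
    ring
  have hint : IntegrableOn (fun x : ℝ =>
      p * (x ^ (p - 1) * Real.exp (-x ^ 2) * Real.sin (w * x))
        - 2 * (x ^ (p + 1) * Real.exp (-x ^ 2) * Real.sin (w * x))
        + w * (x ^ p * Real.exp (-x ^ 2) * Real.cos (w * x))) (Ioi 0) :=
    ((t0.const_mul p).sub (t2.const_mul 2)).add (t1.const_mul w)
  have htop : Filter.Tendsto (fun x : ℝ => x ^ p * Real.exp (-x ^ 2) * Real.sin (w * x))
      Filter.atTop (nhds 0) := by
    have hbound : ∀ᶠ x in Filter.atTop, ‖x ^ p * Real.exp (-x ^ 2) * Real.sin (w * x)‖ ≤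
        x ^ p * Real.exp (-x ^ 2) := by
      filter_upwards [Filter.eventually_ge_atTop (0:ℝ)] with x hx
      rw [Real.norm_eq_abs, abs_mul, abs_of_nonneg (by positivity : (0:ℝ) ≤ x ^ p * Real.exp (-x ^ 2))]
      calc x ^ p * Real.exp (-x ^ 2) * |Real.sin (w * x)|
          ≤ x ^ p * Real.exp (-x ^ 2) * 1 :=
            mul_le_mul_of_nonneg_left (Real.abs_sin_le_one _) (by positivity)
        _ = _ := mul_one _
    refine squeeze_zero_norm' hbound ?_
    · have hoo := rpow_mul_exp_neg_mul_sq_isLittleO_exp_neg one_pos p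
      have h5 : Filter.Tendsto (fun x : ℝ => (1/2 : ℝ) * x) Filter.atTop Filter.atTop :=
        Filter.Tendsto.const_mul_atTop (by norm_num) Filter.tendsto_id
      have h6 : Filter.Tendsto (fun x : ℝ => Real.exp (-((1/2 : ℝ) * x))) Filter.atTop (nhds 0) :=
        Real.tendsto_exp_neg_atTop_nhds_zero.comp h5
      have h7 := hoo.isBigO.trans_tendsto (by simpa [neg_mul] using h6)
      simpa [neg_mul, one_mul] using h7
  have hFTC := integral_Ioi_of_hasDerivAt_of_tendsto hg0 hgderiv hint htop
  have hg00 : (0:ℝ) - 0 ^ p * Real.exp (-(0:ℝ) ^ 2) * Real.sin (w * 0) = 0 := by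
    norm_num
  rw [hg00] at hFTC
  -- rewrite the FF's
  have e0 : FF p 0 w = ∫ x in Ioi (0:ℝ), x ^ (p - 1) * Real.exp (-x ^ 2) * Real.sin (w * x) := by
    unfold FF; norm_num
  have e1 : FF p 1 w = ∫ x in Ioi (0:ℝ), x ^ p * Real.exp (-x ^ 2) * Real.cos (w * x) := by
    unfold FF
    apply setIntegral_congr_fun measurableSet_Ioi
    intro x hx
    dsimp only
    push_cast
    rw [show p - 1 + 1 = p by ring, show w * x + 1 * (π / 2) = w * x + π / 2 by ring,
      Real.sin_add_pi_div_two]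
  have e2 : FF p 2 w = ∫ x in Ioi (0:ℝ), -(x ^ (p + 1) * Real.exp (-x ^ 2) * Real.sin (w * x)) := by
    unfold FF
    apply setIntegral_congr_fun measurableSet_Ioi
    intro x hx
    dsimp only
    push_cast
    rw [show p - 1 + 2 = p + 1 by ring, show w * x + 2 * (π / 2) = w * x + π by ring,
      Real.sin_add_pi]
    ring
  have hsplit : ∫ x in Ioi (0:ℝ),
      (p * (x ^ (p - 1) * Real.exp (-x ^ 2) * Real.sin (w * x))
        - 2 * (x ^ (p + 1) * Real.exp (-x ^ 2) * Real.sin (w * x))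
        + w * (x ^ p * Real.exp (-x ^ 2) * Real.cos (w * x)))
      = p * (∫ x in Ioi (0:ℝ), x ^ (p - 1) * Real.exp (-x ^ 2) * Real.sin (w * x))
        - 2 * (∫ x in Ioi (0:ℝ), x ^ (p + 1) * Real.exp (-x ^ 2) * Real.sin (w * x))
        + w * (∫ x in Ioi (0:ℝ), x ^ p * Real.exp (-x ^ 2) * Real.cos (w * x)) := by
    have ha : IntegrableOn (fun x : ℝ => p * (x ^ (p - 1) * Real.exp (-x ^ 2) * Real.sin (w * x))
        - 2 * (x ^ (p + 1) * Real.exp (-x ^ 2) * Real.sin (w * x))) (Ioi 0) :=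
      (t0.const_mul p).sub (t2.const_mul 2)
    have hb : IntegrableOn (fun x : ℝ => p * (x ^ (p - 1) * Real.exp (-x ^ 2) * Real.sin (w * x)))
        (Ioi 0) := t0.const_mul p
    have hc : IntegrableOn (fun x : ℝ => 2 * (x ^ (p + 1) * Real.exp (-x ^ 2) * Real.sin (w * x)))
        (Ioi 0) := t2.const_mul 2
    have hd : IntegrableOn (fun x : ℝ => w * (x ^ p * Real.exp (-x ^ 2) * Real.cos (w * x)))
        (Ioi 0) := t1.const_mul w
    rw [integral_add ha hd, integral_sub hb hc,
      integral_const_mul, integral_const_mul, integral_const_mul]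
  rw [e0, e1, e2, integral_neg]
  rw [hsplit] at hFTC
  linarith

theorem fp_smooth_and_ode (p : ℝ) (hp : 0 < p) :
    ContDiff ℝ (⊤ : ℕ∞) (fp p) ∧
      ∀ w : ℝ,
        2 * deriv (deriv (fp p)) w + (p - 1) * fp p w +
          deriv (fun w => w * fp p w) w = 0 := by
  refine ⟨fp_contDiff p hp, fun w => ?_⟩
  have hFF0 : fp p = FF p 0 := fp_eq_FF p
  have hd1 : deriv (fp p) = FF p 1 := by rw [hFF0, deriv_FF p hp 0]
  have hd2 : deriv (deriv (fp p)) w = FF p 2 w := by rw [hd1]; rw [deriv_FF p hp 1]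
  have hprod : deriv (fun w => w * fp p w) w = FF p 0 w + w * FF p 1 w := by
    rw [hFF0]
    have h := (hasDerivAt_id' w).fun_mul (hasDerivAt_FF p hp 0 w)
    simpa using h.deriv
  rw [hd2, hprod, hFF0]
  have hk := ode_key p hp w
  have : (p - 1) * FF p 0 w + FF p 0 w = p * FF p 0 w := by ring
  linarith
end

section
/- For p ∈ (0, 2), the function f_p(w) = ∫₀^∞ x^{p-1} e^{-x²} sin(wx) dx vanishes only at w = 0; that is, f_p(w) ≠ 0 for all w ≠ 0. -/
/-!
Expanding `sin (w x)` in its Taylor series and integrating termwise against the Gaussian moments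
`∫₀^∞ xˢ e^{-x²} dx = Γ((s+1)/2)/2` gives `f_p(w) = Γ(a) w / 2 · M(a, 3/2, -w²/4)` with
`a = (p+1)/2`, where `M` is Kummer's function. Kummer's transformation
`M(a, b, -u) = e⁻ᵘ M(b - a, b, u)` turns this into a series whose coefficients are nonnegative,
because `b - a = 1 - p/2 > 0`; hence `f_p(w)` has the sign of `w`. The transformation itself is a
Cauchy product whose coefficients are iterated forward differences of `k ↦ (c)ₖ / (b)ₖ`.
-/

open MeasureTheory Real

open Set Finset Polynomial Nat

lemma ascPochhammer_eval_succ_left {S : Type*} [CommSemiring S] (a : S) (n : ℕ) :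
    (ascPochhammer S (n + 1)).eval a = a * (ascPochhammer S n).eval (a + 1) := by
  simp [ascPochhammer_succ_left]

section
variable {S : Type*} [Semiring S] [PartialOrder S] [IsOrderedRing S]

lemma ascPochhammer_eval_nonneg {a : S} (ha : 0 ≤ a) (n : ℕ) :
    0 ≤ (ascPochhammer S n).eval a := by
  induction n with
  | zero => simp
  | succ n ih => rw [ascPochhammer_succ_eval]; positivity

lemma ascPochhammer_eval_le_of_le {a b : S} (ha : 0 ≤ a) (hab : a ≤ b) (n : ℕ) :
    (ascPochhammer S n).eval a ≤ (ascPochhammer S n).eval b := by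
  induction n with
  | zero => simp
  | succ n ih =>
    simp only [ascPochhammer_succ_eval]
    gcongr
    exact ascPochhammer_eval_nonneg (ha.trans hab) n

end

lemma fwdDiff_iter_ascPochhammer_div {b : ℝ} (hb : 0 < b) (c : ℝ) (n : ℕ) :
    (fwdDiff 1)^[n] (fun k : ℕ ↦ (ascPochhammer ℝ k).eval c / (ascPochhammer ℝ k).eval b) =
      ((-1) ^ n * (ascPochhammer ℝ n).eval (b - c) / (ascPochhammer ℝ n).eval b) •
        fun k : ℕ ↦ (ascPochhammer ℝ k).eval c / (ascPochhammer ℝ k).eval (b + n) := by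
  induction n generalizing b with
  | zero => simp
  | succ n ih =>
    have hΔ : fwdDiff 1 (fun k : ℕ ↦ (ascPochhammer ℝ k).eval c / (ascPochhammer ℝ k).eval b) =
        (-((b - c) / b)) • fun k : ℕ ↦
          (ascPochhammer ℝ k).eval c / (ascPochhammer ℝ k).eval (b + 1) := by
      ext k
      have hb_k : 0 < (ascPochhammer ℝ k).eval b := ascPochhammer_pos k b hb
      have h_shift :
          (ascPochhammer ℝ k).eval (b + 1) = (ascPochhammer ℝ k).eval b * (b + k) / b := by
        rw [eq_div_iff hb.ne', mul_comm, ← ascPochhammer_eval_succ_left, ascPochhammer_succ_eval]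
      simp only [fwdDiff, Pi.smul_apply, smul_eq_mul, ascPochhammer_succ_eval, h_shift]
      field_simp
      ring
    rw [Function.iterate_succ_apply, hΔ, fwdDiff_iter_const_smul, ih (by linarith), smul_smul,
      ascPochhammer_eval_succ_left, ascPochhammer_eval_succ_left]
    congr 1
    · have := ascPochhammer_pos n (b + 1) (by linarith)
      rw [show b + 1 - c = b - c + 1 by ring, pow_succ]
      field_simp
    · push_cast; ring_nf

noncomputable def kummerCoeff (a b : ℝ) (n : ℕ) : ℝ :=
  (ascPochhammer ℝ n).eval a / ((ascPochhammer ℝ n).eval b * n !)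

/-- Kummer's confluent hypergeometric function `M(a, b, z) = ₁F₁(a; b; z)`. -/
noncomputable def kummerM (a b z : ℝ) : ℝ :=
  ∑' n : ℕ, kummerCoeff a b n * z ^ n

lemma kummerCoeff_nonneg {a b : ℝ} (ha : 0 ≤ a) (hb : 0 ≤ b) (n : ℕ) : 0 ≤ kummerCoeff a b n :=
  div_nonneg (ascPochhammer_eval_nonneg ha n)
    (mul_nonneg (ascPochhammer_eval_nonneg hb n) (Nat.cast_nonneg _))

lemma kummerCoeff_le {a b : ℝ} (ha : 0 ≤ a) (hab : a ≤ b) (n : ℕ) :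
    kummerCoeff a b n ≤ (n ! : ℝ)⁻¹ := by
  calc kummerCoeff a b n
      ≤ (ascPochhammer ℝ n).eval b / ((ascPochhammer ℝ n).eval b * n !) := by
        unfold kummerCoeff
        gcongr
        · exact mul_nonneg (ascPochhammer_eval_nonneg (ha.trans hab) n) (Nat.cast_nonneg _)
        · exact ascPochhammer_eval_le_of_le ha hab n
    _ = (ascPochhammer ℝ n).eval b / (ascPochhammer ℝ n).eval b / n ! := by rw [div_mul_eq_div_div]
    _ ≤ (n ! : ℝ)⁻¹ := by rw [← one_div]; gcongr; exact div_self_le_one _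

lemma summable_norm_kummerCoeff_mul_pow {a b : ℝ} (ha : 0 ≤ a) (hab : a ≤ b) (z : ℝ) :
    Summable fun n ↦ ‖kummerCoeff a b n * z ^ n‖ := by
  refine (Real.summable_pow_div_factorial |z|).of_nonneg_of_le (fun n ↦ norm_nonneg _) fun n ↦ ?_
  rw [norm_mul, norm_pow, Real.norm_eq_abs, Real.norm_eq_abs,
    abs_of_nonneg (kummerCoeff_nonneg ha (ha.trans hab) n), div_eq_inv_mul]
  exact mul_le_mul_of_nonneg_right (kummerCoeff_le ha hab n) (by positivity)

lemma kummerM_pos {a b u : ℝ} (ha : 0 ≤ a) (hab : a ≤ b) (hu : 0 ≤ u) : 0 < kummerM a b u :=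
  (summable_norm_kummerCoeff_mul_pow ha hab u).of_norm.tsum_pos
    (fun n ↦ mul_nonneg (kummerCoeff_nonneg ha (ha.trans hab) n) (pow_nonneg hu n)) 0
    (by simp [kummerCoeff])

/-- The left side is `uⁿ / n!` times the `n`-th forward difference of `k ↦ (c)ₖ / (b)ₖ` at `0`
(a Chu–Vandermonde sum). -/
lemma sum_antidiagonal_exp_coeff_mul_kummerCoeff {b : ℝ} (hb : 0 < b) (c u : ℝ) (n : ℕ) :
    ∑ ij ∈ antidiagonal n, (-u) ^ ij.1 / ij.1 ! * (kummerCoeff c b ij.2 * u ^ ij.2) =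
      kummerCoeff (b - c) b n * (-u) ^ n := by
  have hΔ := congr_fun (fwdDiff_iter_ascPochhammer_div hb c n) 0
  simp only [fwdDiff_iter_eq_sum_shift, Pi.smul_apply, smul_eq_mul, zsmul_eq_mul, mul_one,
    zero_add, Int.cast_mul, Int.cast_pow, Int.cast_neg, Int.cast_one, Int.cast_natCast,
    ascPochhammer_zero, eval_one, div_one] at hΔ
  rw [← Nat.sum_antidiagonal_swap]
  simp only [Prod.fst_swap, Prod.snd_swap]
  rw [Nat.sum_antidiagonal_eq_sum_range_succ
    (fun j i ↦ (-u) ^ i / i ! * (kummerCoeff c b j * u ^ j))]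
  have hterm : ∀ j ∈ range (n + 1), (-u) ^ (n - j) / (n - j)! * (kummerCoeff c b j * u ^ j) =
      u ^ n / n ! * ((-1) ^ (n - j) * n.choose j *
        ((ascPochhammer ℝ j).eval c / (ascPochhammer ℝ j).eval b)) := by
    intro j hj
    have hjn : j ≤ n := Nat.lt_succ_iff.mp (mem_range.mp hj)
    have := ascPochhammer_pos j b hb
    rw [Nat.cast_choose ℝ hjn, neg_pow, kummerCoeff, ← pow_sub_mul_pow u hjn]
    field_simp
  rw [sum_congr rfl hterm, ← mul_sum, hΔ, kummerCoeff, neg_pow u]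
  have := ascPochhammer_pos n b hb
  field_simp

theorem kummerM_neg {a b : ℝ} (ha : 0 ≤ a) (hab : a ≤ b) (hb : 0 < b) (u : ℝ) :
    kummerM a b (-u) = exp (-u) * kummerM (b - a) b u := by
  rw [kummerM, kummerM, exp_eq_exp_ℝ, NormedSpace.exp_eq_tsum_div,
    tsum_mul_tsum_eq_tsum_sum_antidiagonal_of_summable_norm
      (by simpa [norm_div] using Real.summable_pow_div_factorial |-u|)
      (summable_norm_kummerCoeff_mul_pow (sub_nonneg.2 hab) (sub_le_self b ha) u)]
  refine tsum_congr fun n ↦ ?_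
  rw [sum_antidiagonal_exp_coeff_mul_kummerCoeff hb, sub_sub_cancel]

lemma Real.Gamma_add_nat_eq_mul_ascPochhammer {a : ℝ} (ha : ∀ n : ℕ, a + n ≠ 0) (n : ℕ) :
    Gamma (a + n) = Gamma a * (ascPochhammer ℝ n).eval a := by
  induction n with
  | zero => simp
  | succ n ih =>
    rw [ascPochhammer_succ_eval, Nat.cast_succ, ← add_assoc, Gamma_add_one (ha n), ih]
    ring

lemma cast_factorial_two_mul_add_one (n : ℕ) :
    ((2 * n + 1)! : ℝ) = 4 ^ n * (ascPochhammer ℝ n).eval (3 / 2) * n ! := by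
  induction n with
  | zero => simp
  | succ n ih =>
    rw [show 2 * (n + 1) + 1 = 2 * n + 1 + 1 + 1 by ring, factorial_succ (2 * n + 1 + 1),
      factorial_succ (2 * n + 1), ascPochhammer_succ_eval, factorial_succ n]
    push_cast
    rw [ih]
    ring

lemma integrableOn_rpow_mul_exp_neg_sq {s : ℝ} (hs : -1 < s) :
    IntegrableOn (fun x : ℝ ↦ x ^ s * exp (-x ^ 2)) (Ioi 0) := by
  simpa using integrableOn_rpow_mul_exp_neg_mul_sq one_pos hs

lemma integral_rpow_mul_exp_neg_sq {s : ℝ} (hs : -1 < s) :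
    ∫ x in Ioi (0 : ℝ), x ^ s * exp (-x ^ 2) = Gamma ((s + 1) / 2) / 2 := by
  have h := integral_rpow_mul_exp_neg_rpow two_pos hs
  simp only [rpow_two] at h
  rw [h]; ring

lemma sin_coeff_mul_Gamma_add_nat {a : ℝ} (ha : 0 < a) (w : ℝ) (n : ℕ) :
    (-1) ^ n * w ^ (2 * n + 1) / (2 * n + 1)! * (Gamma (a + n) / 2) =
      Gamma a * w / 2 * (kummerCoeff a (3 / 2) n * (-(w ^ 2 / 4)) ^ n) := by
  rw [Gamma_add_nat_eq_mul_ascPochhammer (fun n ↦ by positivity), cast_factorial_two_mul_add_one,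
    kummerCoeff, neg_pow (w ^ 2 / 4), div_pow, pow_succ, pow_mul]
  have := ascPochhammer_pos n (3 / 2 : ℝ) (by norm_num)
  field_simp

theorem fp_eq_kummerM {p : ℝ} (hp0 : 0 < p) (hp2 : p ≤ 2) (w : ℝ) :
    fp p w = Gamma ((p + 1) / 2) * w / 2 * kummerM ((p + 1) / 2) (3 / 2) (-(w ^ 2 / 4)) := by
  set C : ℕ → ℝ := fun n ↦ (-1) ^ n * w ^ (2 * n + 1) / (2 * n + 1)!
  set g : ℕ → ℝ → ℝ := fun n x ↦ x ^ (p + 2 * n) * exp (-x ^ 2)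
  have hs (n : ℕ) : -1 < p + 2 * n := by linarith [(Nat.cast_nonneg n : (0 : ℝ) ≤ n)]
  have hg_int (n : ℕ) : ∫ x in Ioi (0 : ℝ), g n x = Gamma ((p + 1) / 2 + n) / 2 := by
    rw [integral_rpow_mul_exp_neg_sq (hs n), show (p + 2 * n + 1) / 2 = (p + 1) / 2 + n by ring]
  have hexpand : EqOn (fun x ↦ x ^ (p - 1) * exp (-x ^ 2) * sin (w * x))
      (fun x ↦ ∑' n, C n * g n x) (Ioi 0) := by
    intro x (hx : 0 < x)
    simp only [C, g, sin_eq_tsum, ← tsum_mul_left]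
    refine tsum_congr fun n ↦ ?_
    rw [show p + 2 * n = p - 1 + (2 * n + 1 : ℕ) by push_cast; ring, rpow_add_natCast hx.ne']
    ring
  have hterm (n : ℕ) : ∫ x in Ioi (0 : ℝ), C n * g n x =
      Gamma ((p + 1) / 2) * w / 2 * (kummerCoeff ((p + 1) / 2) (3 / 2) n * (-(w ^ 2 / 4)) ^ n) := by
    rw [integral_const_mul, hg_int, sin_coeff_mul_Gamma_add_nat (by positivity)]
  have hnorm (n : ℕ) : ∫ x in Ioi (0 : ℝ), ‖C n * g n x‖ =
      ‖Gamma ((p + 1) / 2) * w / 2 *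
        (kummerCoeff ((p + 1) / 2) (3 / 2) n * (-(w ^ 2 / 4)) ^ n)‖ := by
    have hpos : 0 < Gamma ((p + 1) / 2 + n) := Gamma_pos_of_pos (by positivity)
    rw [← sin_coeff_mul_Gamma_add_nat (by positivity), norm_mul,
      norm_of_nonneg (by positivity : 0 ≤ Gamma ((p + 1) / 2 + n) / 2), ← hg_int,
      ← integral_const_mul]
    refine setIntegral_congr_fun measurableSet_Ioi fun x (hx : 0 < x) ↦ ?_
    rw [norm_mul, norm_of_nonneg (by positivity : 0 ≤ g n x)]
  have hint (n : ℕ) : IntegrableOn (fun x ↦ C n * g n x) (Ioi 0) :=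
    (integrableOn_rpow_mul_exp_neg_sq (hs n)).const_mul (C n)
  have hsum : Summable fun n ↦ ∫ x in Ioi (0 : ℝ), ‖C n * g n x‖ :=
    ((summable_norm_kummerCoeff_mul_pow (a := (p + 1) / 2) (b := 3 / 2) (by positivity)
      (by linarith) _).mul_left _).congr fun n ↦ ((hnorm n).trans (norm_mul _ _)).symm
  calc fp p w = ∫ x in Ioi (0 : ℝ), ∑' n, C n * g n x :=
        setIntegral_congr_fun measurableSet_Ioi hexpand
    _ = ∑' n, ∫ x in Ioi (0 : ℝ), C n * g n x :=
        (integral_tsum_of_summable_integral_norm hint hsum).symm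
    _ = _ := by simp_rw [hterm, tsum_mul_left, kummerM]

theorem fp_ne_zero_of_ne_zero (p : ℝ) (hp0 : 0 < p) (hp2 : p < 2) :
    ∀ w : ℝ, w ≠ 0 → fp p w ≠ 0 := by
  intro w hw
  have ha : 0 ≤ (p + 1) / 2 := by positivity
  have hab : (p + 1) / 2 ≤ 3 / 2 := by linarith
  rw [fp_eq_kummerM hp0 hp2.le, kummerM_neg ha hab (by norm_num)]
  have hΓ : 0 < Gamma ((p + 1) / 2) := Gamma_pos_of_pos (by positivity)
  have hM : 0 < kummerM (3 / 2 - (p + 1) / 2) (3 / 2) (w ^ 2 / 4) :=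
    kummerM_pos (by linarith) (by linarith) (by positivity)
  positivity
end

section
/- Let p be an even integer ≥ 4, 0 < a < 1, and let ω ≠ 0 be a zero of the probabilist's Hermite polynomial He_{p-1}. Then for every θ ∈ ℝ and |ρ| ≤ 1, the density f_X(x) ∝ e^{-((1-a)/a)·x²/2}·(1 + ρ·cos(ωx/√a + θ)) satisfies ∫_{-∞}^∞ sign(x - y)|x - y|^{p-1} φ(y - x) · e^{(1-a)x²/2} f_X(√a x) dx = 0 for all y ∈ ℝ. -/
/-!
Substituting `x = y + t`, the tilt `e^{(1-a)x²/2}` cancels the Gaussian factor of the scaled prior,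
so the integral becomes `c (2π)^{-1/2} ∫ t^{p-1} e^{-t²/2} (1 + ρ cos (w t + ψ)) dt` with
`ψ = w y + θ`. The constant term vanishes because `p - 1` is odd. The cosine term is the real
part of `e^{iψ}` times the Fourier transform `∫ tⁿ e^{-t²/2} e^{iwt} dt = iⁿ √(2π) Heₙ(w) e^{-w²/2}`,
which vanishes at the zero `w` of `He_{p-1}`. That Fourier formula follows by induction on `n`:
differentiating in `w` under the integral sign multiplies the integrand by `it`, and on the right
`(Heₙ(w) e^{-w²/2})' = -Heₙ₊₁(w) e^{-w²/2}` by the recursion `Heₙ₊₁ = X Heₙ - Heₙ'`.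
-/

open MeasureTheory ProbabilityTheory Real

noncomputable section

namespace HermiteGaussian

open Polynomial

lemma integrable_pow_mul_gaussian (n : ℕ) :
    Integrable (fun x : ℝ => x ^ n * exp (-(x ^ 2 / 2))) := by
  have h := integrable_rpow_mul_exp_neg_mul_sq (b := 1 / 2) (by norm_num) (s := n)
    (by linarith [(n.cast_nonneg : (0 : ℝ) ≤ n)])
  simp only [Real.rpow_natCast] at h
  convert h using 4
  ring

lemma integral_pow_mul_gaussian_of_odd {n : ℕ} (hn : Odd n) :
    ∫ x : ℝ, x ^ n * exp (-(x ^ 2 / 2)) = 0 := by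
  have h := integral_neg_eq_self (fun x : ℝ => x ^ n * exp (-(x ^ 2 / 2))) volume
  simp only [hn.neg_pow, even_two.neg_pow, neg_mul, integral_neg] at h
  linarith

lemma hasDerivAt_hermite_mul_gaussian (n : ℕ) (w : ℝ) :
    HasDerivAt (fun u : ℝ => aeval u (hermite n) * exp (-(u ^ 2 / 2)))
      (-(aeval w (hermite (n + 1)) * exp (-(w ^ 2 / 2)))) w := by
  have hg : HasDerivAt (fun u : ℝ => -(u ^ 2 / 2)) (-w) w := by
    simpa using ((hasDerivAt_pow 2 w).div_const 2).fun_neg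
  refine (((hermite n).hasDerivAt_aeval w).mul hg.exp).congr_deriv ?_
  rw [hermite_succ, map_sub, map_mul, aeval_X]
  ring

def fourierMomentIntegrand (n : ℕ) (w x : ℝ) : ℂ :=
  ((x ^ n * exp (-(x ^ 2 / 2)) : ℝ) : ℂ) * Complex.exp ((w * x : ℝ) * Complex.I)

lemma norm_fourierMomentIntegrand (n : ℕ) (w x : ℝ) :
    ‖fourierMomentIntegrand n w x‖ = |x| ^ n * exp (-(x ^ 2 / 2)) := by
  rw [fourierMomentIntegrand, norm_mul, Complex.norm_exp_ofReal_mul_I, mul_one,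
    Complex.norm_real, Real.norm_eq_abs, abs_mul, abs_pow, abs_exp]

lemma continuous_fourierMomentIntegrand (n : ℕ) (w : ℝ) :
    Continuous (fourierMomentIntegrand n w) := by
  unfold fourierMomentIntegrand
  fun_prop

lemma integrable_fourierMomentIntegrand (n : ℕ) (w : ℝ) :
    Integrable (fourierMomentIntegrand n w) := by
  refine (integrable_pow_mul_gaussian n).norm.mono'
    (continuous_fourierMomentIntegrand n w).aestronglyMeasurable (.of_forall fun x => ?_)
  rw [norm_fourierMomentIntegrand, norm_mul, norm_pow, Real.norm_eq_abs, Real.norm_eq_abs,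
    abs_exp]

lemma hasDerivAt_fourierMomentIntegrand (n : ℕ) (w x : ℝ) :
    HasDerivAt (fun u : ℝ => fourierMomentIntegrand n u x)
      (Complex.I * fourierMomentIntegrand (n + 1) w x) w := by
  have h : HasDerivAt (fun u : ℝ => ((u * x : ℝ) : ℂ) * Complex.I) (x * Complex.I) w := by
    simpa using ((hasDerivAt_mul_const x).ofReal_comp).mul_const Complex.I
  refine (h.cexp.const_mul _).congr_deriv ?_
  simp only [fourierMomentIntegrand]
  push_cast
  ring

lemma hasDerivAt_integral_fourierMomentIntegrand (n : ℕ) (w : ℝ) :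
    HasDerivAt (fun u : ℝ => ∫ x, fourierMomentIntegrand n u x)
      (Complex.I * ∫ x, fourierMomentIntegrand (n + 1) w x) w := by
  rw [← integral_const_mul]
  refine (hasDerivAt_integral_of_dominated_loc_of_deriv_le (Metric.ball_mem_nhds w one_pos)
    (.of_forall fun u => (continuous_fourierMomentIntegrand n u).aestronglyMeasurable)
    (integrable_fourierMomentIntegrand n w)
    ((continuous_fourierMomentIntegrand (n + 1) w).const_mul _).aestronglyMeasurable
    (.of_forall fun x u _ => ?_) (integrable_fourierMomentIntegrand (n + 1) 0).norm
    (.of_forall fun x u _ => hasDerivAt_fourierMomentIntegrand n u x)).2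
  rw [norm_mul, Complex.norm_I, one_mul, norm_fourierMomentIntegrand,
    norm_fourierMomentIntegrand]

theorem integral_fourierMomentIntegrand (n : ℕ) (w : ℝ) :
    ∫ x, fourierMomentIntegrand n w x
      = Complex.I ^ n * (√(2 * π) : ℂ) *
          ((aeval w (hermite n) * exp (-(w ^ 2 / 2)) : ℝ) : ℂ) := by
  induction n generalizing w with
  | zero =>
    have h := integral_cexp_quadratic (b := -(1 / 2)) (by norm_num) (Complex.I * w) 0
    have hsqrt : ((π : ℂ) / -(-(1 / 2))) ^ (1 / 2 : ℂ) = (√(2 * π) : ℂ) := by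
      rw [Real.sqrt_eq_rpow, Complex.ofReal_cpow (by positivity)]
      push_cast
      ring_nf
    simp only [fourierMomentIntegrand, pow_zero, one_mul, hermite_zero, map_one, ← hsqrt]
    convert h using 3 with x
    · push_cast
      rw [← Complex.exp_add]
      congr 1
      ring
    · push_cast
      rw [mul_pow, Complex.I_sq]
      congr 1
      ring
  | succ n ih =>
    have h := ((hasDerivAt_hermite_mul_gaussian n w).ofReal_comp.const_mul
      (Complex.I ^ n * (√(2 * π) : ℂ)))
    simp only [← ih] at h
    have h' := (hasDerivAt_integral_fourierMomentIntegrand n w).unique h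
    push_cast at h' ⊢
    linear_combination
      (-Complex.I) * h' + (∫ x, fourierMomentIntegrand (n + 1) w x) * Complex.I_sq

lemma integral_pow_mul_gaussian_mul_cos_of_hermite_eq_zero {n : ℕ} {w : ℝ}
    (hw : aeval w (hermite n) = 0) (ψ : ℝ) :
    ∫ x : ℝ, x ^ n * exp (-(x ^ 2 / 2)) * cos (w * x + ψ) = 0 := by
  have hre (x : ℝ) : x ^ n * exp (-(x ^ 2 / 2)) * cos (w * x + ψ)
      = (Complex.exp (ψ * Complex.I) * fourierMomentIntegrand n w x).re := by
    rw [fourierMomentIntegrand, mul_left_comm, ← Complex.exp_add, ← add_mul, ← Complex.ofReal_add,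
      Complex.re_ofReal_mul, Complex.exp_ofReal_mul_I_re, add_comm ψ]
  simp_rw [hre, ← RCLike.re_to_complex]
  rw [integral_re ((integrable_fourierMomentIntegrand n w).const_mul _), integral_const_mul,
    integral_fourierMomentIntegrand, hw]
  simp

lemma integral_odd_pow_mul_gaussian_mul_one_add_cos {n : ℕ} (hn : Odd n) {w : ℝ}
    (hw : aeval w (hermite n) = 0) (ρ ψ : ℝ) :
    ∫ x : ℝ, x ^ n * exp (-(x ^ 2 / 2)) * (1 + ρ * cos (w * x + ψ)) = 0 := by
  have hcos : Integrable (fun x : ℝ => x ^ n * exp (-(x ^ 2 / 2)) * cos (w * x + ψ)) :=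
    (integrable_pow_mul_gaussian n).mul_bdd (c := 1) (by fun_prop)
      (.of_forall fun x => by simpa using abs_cos_le_one _)
  simp_rw [mul_one_add, mul_left_comm _ ρ]
  rw [integral_add (integrable_pow_mul_gaussian n) (hcos.const_mul ρ), integral_const_mul,
    integral_pow_mul_gaussian_of_odd hn,
    integral_pow_mul_gaussian_mul_cos_of_hermite_eq_zero hw, mul_zero, add_zero]

lemma sign_mul_abs_pow_of_odd {n : ℕ} (hn : Odd n) (t : ℝ) : sign t * |t| ^ n = t ^ n := by
  rcases lt_trichotomy t 0 with h | rfl | h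
  · rw [sign_of_neg h, abs_of_neg h, hn.neg_pow, neg_one_mul, neg_neg]
  · simp [hn.pos.ne']
  · rw [sign_of_pos h, abs_of_pos h, one_mul]

lemma exp_mul_scaled_prior {a : ℝ} (ha : 0 < a) (c ρ w θ x : ℝ) :
    exp ((1 - a) * x ^ 2 / 2) * (c * exp (-((1 - a) / a) * (√a * x) ^ 2 / 2) *
      (1 + ρ * cos (w * (√a * x) / √a + θ))) = c * (1 + ρ * cos (w * x + θ)) := by
  have hcos : w * (√a * x) / √a = w * x := by field_simp
  have hexp : exp ((1 - a) * x ^ 2 / 2) * exp (-((1 - a) / a) * (√a * x) ^ 2 / 2) = 1 := by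
    rw [← exp_add, mul_pow, sq_sqrt ha.le, exp_eq_one_iff]
    field_simp
    ring
  rw [hcos]
  linear_combination c * (1 + ρ * cos (w * x + θ)) * hexp

end HermiteGaussian

open HermiteGaussian in
theorem hermite_zero_gives_linear_lp_estimator_general
    (p : ℕ) (hp_even : Even p) (hp4 : 4 ≤ p)
    (a : ℝ) (ha : 0 < a)
    (w : ℝ)
    (hzero : Polynomial.aeval w (Polynomial.hermite (p - 1)) = 0)
    (θ ρ : ℝ) (c : ℝ)
    (fX : ℝ → ℝ)
    (hfX : ∀ x, fX x = c * Real.exp (-((1 - a) / a) * x ^ 2 / 2) *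
        (1 + ρ * Real.cos (w * x / Real.sqrt a + θ))) :
    ∀ y : ℝ,
      ∫ x : ℝ,
        Real.sign (x - y) * |x - y| ^ (p - 1) * gaussianPDFReal 0 1 (y - x) *
          Real.exp ((1 - a) * x ^ 2 / 2) * fX (Real.sqrt a * x) = 0 := by
  intro y
  have hodd : Odd (p - 1) := Nat.Even.sub_odd (by omega) hp_even odd_one
  have hintegrand (x : ℝ) :
      sign (x - y) * |x - y| ^ (p - 1) * gaussianPDFReal 0 1 (y - x) *
        exp ((1 - a) * x ^ 2 / 2) * fX (√a * x)
      = c * (√(2 * π))⁻¹ * ((x - y) ^ (p - 1) * exp (-((x - y) ^ 2 / 2)) *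
        (1 + ρ * cos (w * (x - y) + (w * y + θ)))) := by
    rw [mul_assoc _ (exp _), hfX, exp_mul_scaled_prior ha, sign_mul_abs_pow_of_odd hodd]
    simp only [gaussianPDFReal, NNReal.coe_one, mul_one, sub_zero]
    ring_nf
  simp_rw [hintegrand]
  rw [integral_const_mul, integral_sub_right_eq_self (fun t => t ^ (p - 1) * exp (-(t ^ 2 / 2)) *
    (1 + ρ * cos (w * t + (w * y + θ)))), integral_odd_pow_mul_gaussian_mul_one_add_cos hodd hzero,
    mul_zero]

theorem hermite_zero_gives_linear_lp_estimator
    (p : ℕ) (hp_even : Even p) (hp4 : 4 ≤ p)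
    (a : ℝ) (ha : 0 < a) (ha1 : a < 1)
    (w : ℝ) (hw : w ≠ 0)
    (hzero : Polynomial.aeval w (Polynomial.hermite (p - 1)) = 0)
    (θ ρ : ℝ) (hρ : |ρ| ≤ 1) (c : ℝ) (hc : 0 < c)
    (fX : ℝ → ℝ)
    (hfX : ∀ x, fX x = c * Real.exp (-((1 - a) / a) * x ^ 2 / 2) *
        (1 + ρ * Real.cos (w * x / Real.sqrt a + θ))) :
    ∀ y : ℝ,
      ∫ x : ℝ,
        Real.sign (x - y) * |x - y| ^ (p - 1) * gaussianPDFReal 0 1 (y - x) *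
          Real.exp ((1 - a) * x ^ 2 / 2) * fX (Real.sqrt a * x) = 0 :=
  hermite_zero_gives_linear_lp_estimator_general p hp_even hp4 a ha w hzero θ ρ c fX hfX
end
end
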